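/- Assume ‖Q⁻¹‖₂ < 2β and 0 < λ ≤ 1/λ_max(BQ⁻¹Bᵀ), and assume T has at least one fixed point. Let w^k = (v^k, u^k) be generated by w^{k+1} = T(w^k) from an arbitrary initial point. Then the FP²O_QN iteration is asymptotically regular: ‖w^{k+1} − w^k‖_{λ,Q} → 0 as k → ∞; in particular ‖v^{k+1} − v^k‖ → 0 and ‖u^{k+1} − u^k‖_Q → 0. -/

import Mathlib

open scoped RealInnerProductSpace
open Filter Topology

/-!
Fix a fixed point `(v*, u*)` of `T` and put `C = B Q⁻¹ Bᵀ`. Firm nonexpansiveness of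
`I - prox` (convexity of `f₁`), cocoercivity of `∇f₂` and `λ C ≤ I` (from `λ ≤ 1 / λ_max`) show
that one step decreases `‖u - u*‖²_Q + λ ‖v - v*‖²` by at least the nonnegative quantity
`(2β - ‖Q⁻¹‖) ‖∇f₂ u - ∇f₂ u*‖² + λ² ‖v - v*‖²_C + (λ ‖v⁺ - v‖² - λ² ‖v⁺ - v‖²_C)`.
These dissipations are therefore summable and tend to `0`, and the squared `(λ, Q)`-norm of the
increment `w^{k+1} - w^k` is bounded by a fixed multiple of the dissipations at steps `k` and
`k + 1`.
-/

open Set ContinuousLinearMap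

theorem nonneg_of_forall_pos_le_one_add_mul {a b : ℝ}
    (h : ∀ t : ℝ, 0 < t → t ≤ 1 → 0 ≤ a + t * b) : 0 ≤ a := by
  have hlim : Tendsto (fun t : ℝ => a + t * b) (𝓝[>] 0) (𝓝 a) :=
    tendsto_nhdsWithin_of_tendsto_nhds <| by
      simpa using ((continuous_id.mul continuous_const).const_add a).tendsto 0
  refine ge_of_tendsto hlim ?_
  filter_upwards [Ioc_mem_nhdsGT one_pos] with t ht using h t ht.1 ht.2

theorem tendsto_zero_of_succ_add_le {b d : ℕ → ℝ} (hb : ∀ k, 0 ≤ b k) (hd : ∀ k, 0 ≤ d k)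
    (h : ∀ k, b (k + 1) + d k ≤ b k) : Tendsto d atTop (𝓝 0) := by
  have hsum : ∀ n, ∑ k ∈ Finset.range n, d k + b n ≤ b 0 := by
    intro n
    induction n with
    | zero => simp
    | succ n ih => rw [Finset.sum_range_succ]; linarith [h n]
  exact (summable_of_sum_range_le hd fun n => by linarith [hsum n, hb n]).tendsto_atTop_zero

section InnerProductSpace

variable {E : Type*} [NormedAddCommGroup E] [InnerProductSpace ℝ E]

theorem LinearMap.IsSymmetric.of_rightInverse {Q Qinv : E →ₗ[ℝ] E} (hQ : Q.IsSymmetric)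
    (hinv : Function.RightInverse Qinv Q) : Qinv.IsSymmetric := fun x y =>
  calc ⟪Qinv x, y⟫ = ⟪Qinv x, Q (Qinv y)⟫ := by rw [hinv y]
    _ = ⟪x, Qinv y⟫ := by rw [← hQ, hinv x]

namespace ContinuousLinearMap

theorem real_inner_apply_self_le (T : E →L[ℝ] E) (x : E) : ⟪T x, x⟫ ≤ ‖T‖ * ‖x‖ ^ 2 :=
  calc ⟪T x, x⟫ ≤ ‖T x‖ * ‖x‖ := real_inner_le_norm _ _
    _ ≤ ‖T‖ * ‖x‖ * ‖x‖ := by gcongr; exact le_opNorm _ _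
    _ = ‖T‖ * ‖x‖ ^ 2 := by ring

theorem IsPositive.inner_sub_map_sub_le {T : E →L[ℝ] E} (hT : T.IsPositive) (a b : E) :
    ⟪a - b, T (a - b)⟫ ≤ 2 * ⟪a, T a⟫ + 2 * ⟪b, T b⟫ := by
  have hsum := hT.inner_nonneg_right (a + b)
  have hsymm : ⟪b, T a⟫ = ⟪a, T b⟫ := by rw [real_inner_comm, hT.inner_left_eq_inner_right]
  simp only [map_add, map_sub, inner_add_left, inner_add_right, inner_sub_left,
    inner_sub_right, hsymm] at hsum ⊢
  linarith

theorem IsPositive.of_rightInverse {Q Qinv : E →L[ℝ] E} (hQ : Q.IsPositive)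
    (hinv : Function.RightInverse Qinv Q) : Qinv.IsPositive := by
  refine (isPositive_iff _).2 ⟨hQ.isSymmetric.of_rightInverse hinv, fun x => ?_⟩
  simpa only [hinv x, real_inner_comm] using hQ.inner_nonneg_right (Qinv x)

theorem inner_map_self_le_mul_norm_sq [FiniteDimensional ℝ E] {T : E →L[ℝ] E}
    (hT : T.IsSymmetric) {μ : ℝ}
    (hμ : μ ∈ upperBounds {ν | Module.End.HasEigenvalue T.toLinearMap ν}) (x : E) :
    ⟪x, T x⟫ ≤ μ * ‖x‖ ^ 2 := by
  rcases eq_or_ne x 0 with rfl | hx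
  · simp
  have : Nontrivial E := nontrivial_of_ne x 0 hx
  have hbdd : BddAbove (Set.range fun y : {y : E // y ≠ 0} => T.rayleighQuotient y) :=
    ⟨‖T‖, by rintro _ ⟨y, rfl⟩; exact (le_abs_self _).trans (T.rayleighQuotient_le_norm y)⟩
  have hx' : T.rayleighQuotient x ≤ μ :=
    (le_ciSup hbdd ⟨x, hx⟩).trans (hμ hT.hasEigenvalue_iSup_of_finiteDimensional)
  rw [rayleighQuotient, reApplyInnerSelf_apply, RCLike.re_to_real,
    div_le_iff₀ (by positivity), real_inner_comm] at hx'
  exact hx'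

theorem mul_inner_map_self_le_norm_sq [FiniteDimensional ℝ E] {T : E →L[ℝ] E}
    (hT : T.IsSymmetric) {μ lam : ℝ}
    (hμ : μ ∈ upperBounds {ν | Module.End.HasEigenvalue T.toLinearMap ν}) (hlam : 0 < lam)
    (hlamμ : lam ≤ 1 / μ) (x : E) : lam * ⟪x, T x⟫ ≤ ‖x‖ ^ 2 := by
  have hμ_pos : 0 < μ := by
    by_contra! h
    linarith [one_div_nonpos.2 h]
  have : lam * μ ≤ 1 := (le_div_iff₀ hμ_pos).1 hlamμ
  nlinarith [inner_map_self_le_mul_norm_sq hT hμ x, sq_nonneg ‖x‖]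

end ContinuousLinearMap

theorem ConvexOn.inner_sub_le_of_isMinOn {g : E → ℝ} (hg : ConvexOn ℝ univ g) {w p : E}
    (hp : IsMinOn (fun x => g x + 1 / 2 * ‖x - w‖ ^ 2) univ p) (z : E) :
    ⟪w - p, z - p⟫ ≤ g z - g p := by
  rw [← sub_nonneg]
  refine nonneg_of_forall_pos_le_one_add_mul (b := 1 / 2 * ‖z - p‖ ^ 2) fun t ht ht1 => ?_
  have hmin := isMinOn_univ_iff.1 hp ((1 - t) • p + t • z)
  have hconv : g ((1 - t) • p + t • z) ≤ (1 - t) * g p + t * g z :=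
    hg.2 (mem_univ p) (mem_univ z) (sub_nonneg.2 ht1) ht.le (sub_add_cancel 1 t)
  have hexp : (1 - t) • p + t • z - w = (p - w) + t • (z - p) := by
    rw [sub_smul, one_smul, smul_sub]; abel
  have hflip : ⟪p - w, z - p⟫ = -⟪w - p, z - p⟫ := by rw [← inner_neg_left, neg_sub]
  rw [hexp, norm_add_sq_real, inner_smul_right, hflip, norm_smul, Real.norm_eq_abs, mul_pow,
    sq_abs] at hmin
  nlinarith

theorem ConvexOn.norm_sub_sub_sq_le_inner_of_isMinOn {g : E → ℝ} (hg : ConvexOn ℝ univ g)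
    {a b p q : E} (hp : IsMinOn (fun x => g x + 1 / 2 * ‖x - a‖ ^ 2) univ p)
    (hq : IsMinOn (fun x => g x + 1 / 2 * ‖x - b‖ ^ 2) univ q) :
    ‖(a - p) - (b - q)‖ ^ 2 ≤ ⟪(a - p) - (b - q), a - b⟫ := by
  have hpq := hg.inner_sub_le_of_isMinOn hp q
  have hqp := hg.inner_sub_le_of_isMinOn hq p
  have hab : a - b = ((a - p) - (b - q)) + (p - q) := by abel
  have hflip : ⟪a - p, p - q⟫ = -⟪a - p, q - p⟫ := by rw [← inner_neg_right, neg_sub]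
  rw [hab, inner_add_right, real_inner_self_eq_norm_sq, le_add_iff_nonneg_right,
    inner_sub_left, hflip]
  linarith

theorem inner_sub_inv_map_sub_inv_le {Q Qinv : E →L[ℝ] E} (hQ : Q.IsSymmetric)
    (hinv : Function.RightInverse Qinv Q) {β : ℝ} {x g : E} (hco : β * ‖g‖ ^ 2 ≤ ⟪g, x⟫) :
    ⟪x - Qinv g, Q (x - Qinv g)⟫ ≤ ⟪x, Q x⟫ - (2 * β - ‖Qinv‖) * ‖g‖ ^ 2 := by
  have hcross : ⟪Qinv g, Q x⟫ = ⟪g, x⟫ := by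
    have h : ⟪Q (Qinv g), x⟫ = ⟪Qinv g, Q x⟫ := hQ _ _
    rw [← h, hinv]
  rw [map_sub, hinv, inner_sub_left, inner_sub_right, inner_sub_right, hcross,
    real_inner_comm g x]
  linarith [Qinv.real_inner_apply_self_le g]

theorem dual_descent_of_norm_sq_le_inner {C : E →L[ℝ] E} (hC : C.IsSymmetric) {lam : ℝ}
    (hlam : 0 ≤ lam) {t e y : E} (hfirm : ‖t‖ ^ 2 ≤ ⟪t, y + e - lam • C e⟫) :
    lam * ‖t‖ ^ 2 + lam ^ 2 * ⟪e, C e⟫ + (lam * ‖t - e‖ ^ 2 - lam ^ 2 * ⟪t - e, C (t - e)⟫)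
      ≤ 2 * lam * ⟪y, t⟫ - lam ^ 2 * ⟪t, C t⟫ + lam * ‖e‖ ^ 2 := by
  have hsymm : ⟪e, C t⟫ = ⟪t, C e⟫ := by
    have h : ⟪C e, t⟫ = ⟪e, C t⟫ := hC _ _
    rw [← h, real_inner_comm]
  rw [norm_sub_sq_real, map_sub, inner_sub_left, inner_sub_right, inner_sub_right, hsymm]
  rw [inner_sub_right, inner_add_right, inner_smul_right, real_inner_comm y] at hfirm
  nlinarith [mul_le_mul_of_nonneg_left hfirm hlam]

end InnerProductSpace

namespace FP2O

section Splitting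

variable {E F : Type*} [NormedAddCommGroup E] [InnerProductSpace ℝ E] [CompleteSpace E]
  [NormedAddCommGroup F] [InnerProductSpace ℝ F] [CompleteSpace F]
  {B : E →L[ℝ] F} {Q Qinv : E →L[ℝ] E} {lam β : ℝ}

variable (B Qinv lam β) in
/-- With `g = ∇f₂ u - ∇f₂ u*`, `e = v - v*` and `t = v⁺ - v*`: a lower bound for the one-step
decrease of `‖u - u*‖²_Q + λ ‖v - v*‖²`. -/
noncomputable def dissipation (g : E) (e t : F) : ℝ :=
  (2 * β - ‖Qinv‖) * ‖g‖ ^ 2 + lam ^ 2 * ⟪e, (B ∘L Qinv ∘L adjoint B) e⟫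
    + (lam * ‖t - e‖ ^ 2 - lam ^ 2 * ⟪t - e, (B ∘L Qinv ∘L adjoint B) (t - e)⟫)

theorem inner_inv_adjoint_map_inv_adjoint (hinv : Function.RightInverse Qinv Q) (y : F) :
    ⟪Qinv (adjoint B y), Q (Qinv (adjoint B y))⟫ = ⟪y, (B ∘L Qinv ∘L adjoint B) y⟫ := by
  rw [hinv, comp_apply, comp_apply, adjoint_inner_right, real_inner_comm]

theorem inner_sub_smul_map_sub_smul_eq (hQ : Q.IsSymmetric)
    (hinv : Function.RightInverse Qinv Q) (s : E) (y : F) :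
    ⟪s - lam • Qinv (adjoint B y), Q (s - lam • Qinv (adjoint B y))⟫
      = ⟪s, Q s⟫ - 2 * lam * ⟪B s, y⟫ + lam ^ 2 * ⟪y, (B ∘L Qinv ∘L adjoint B) y⟫ := by
  have hcross : ⟪Qinv (adjoint B y), Q s⟫ = ⟪B s, y⟫ := by
    have h : ⟪Q (Qinv (adjoint B y)), s⟫ = ⟪Qinv (adjoint B y), Q s⟫ := hQ _ _
    rw [← h, hinv, adjoint_inner_left, real_inner_comm]
  simp only [map_sub, map_smul, inner_sub_left, inner_sub_right, real_inner_smul_left,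
    real_inner_smul_right, hcross]
  rw [inner_inv_adjoint_map_inv_adjoint hinv, hinv, adjoint_inner_right]
  ring

theorem lyapunov_descent (hQ : Q.IsSymmetric) (hinv : Function.RightInverse Qinv Q)
    (hlam : 0 ≤ lam) {x g : E} {e t : F} (hco : β * ‖g‖ ^ 2 ≤ ⟪g, x⟫)
    (hfirm : ‖t‖ ^ 2 ≤ ⟪t, B (x - Qinv g) + e - lam • (B ∘L Qinv ∘L adjoint B) e⟫) :
    ⟪x - Qinv g - lam • Qinv (adjoint B t), Q (x - Qinv g - lam • Qinv (adjoint B t))⟫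
        + lam * ‖t‖ ^ 2 + dissipation B Qinv lam β g e t
      ≤ ⟪x, Q x⟫ + lam * ‖e‖ ^ 2 := by
  have hC : (B ∘L Qinv ∘L adjoint B).IsSymmetric :=
    ((isSelfAdjoint_iff_isSymmetric.2 (hQ.of_rightInverse hinv)).conj_adjoint B).isSymmetric
  have hprimal := inner_sub_inv_map_sub_inv_le hQ hinv hco
  have hdual := dual_descent_of_norm_sq_le_inner hC hlam hfirm
  rw [inner_sub_smul_map_sub_smul_eq hQ hinv, dissipation]
  linarith

theorem le_dissipation (hQ : Q.IsPositive) (hinv : Function.RightInverse Qinv Q)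
    (hlam : 0 ≤ lam) (hc : ‖Qinv‖ ≤ 2 * β)
    (hC : ∀ y, lam * ⟪y, (B ∘L Qinv ∘L adjoint B) y⟫ ≤ ‖y‖ ^ 2)
    (g : E) (e t : F) :
    (2 * β - ‖Qinv‖) * ‖g‖ ^ 2 ≤ dissipation B Qinv lam β g e t ∧
      lam ^ 2 * ⟪e, (B ∘L Qinv ∘L adjoint B) e⟫ ≤ dissipation B Qinv lam β g e t := by
  have hCe := ((hQ.of_rightInverse hinv).conj_adjoint B).inner_nonneg_right e
  have hCte : lam ^ 2 * ⟪t - e, (B ∘L Qinv ∘L adjoint B) (t - e)⟫ ≤ lam * ‖t - e‖ ^ 2 := by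
    nlinarith [mul_le_mul_of_nonneg_left (hC (t - e)) hlam]
  have hg : 0 ≤ (2 * β - ‖Qinv‖) * ‖g‖ ^ 2 := mul_nonneg (by linarith) (sq_nonneg _)
  unfold dissipation
  constructor <;> nlinarith [sq_nonneg lam]

theorem inner_increment_le (hQ : Q.IsPositive) (hinv : Function.RightInverse Qinv Q)
    (hlam : 0 ≤ lam) (hc : ‖Qinv‖ < 2 * β)
    (hC : ∀ y, lam * ⟪y, (B ∘L Qinv ∘L adjoint B) y⟫ ≤ ‖y‖ ^ 2)
    (x g : E) (e t : F) :
    ⟪(x - Qinv g - lam • Qinv (adjoint B t)) - x, Q ((x - Qinv g - lam • Qinv (adjoint B t)) - x)⟫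
        + lam * ‖t - e‖ ^ 2
      ≤ (2 * ‖Qinv‖ / (2 * β - ‖Qinv‖) + 3) * dissipation B Qinv lam β g e t
        + 4 * (lam ^ 2 * ⟪t, (B ∘L Qinv ∘L adjoint B) t⟫) := by
  have hsplit :
      x - Qinv g - lam • Qinv (adjoint B t) - x = -Qinv g - lam • Qinv (adjoint B t) := by
    abel
  have hprimal := hQ.inner_sub_map_sub_le (-Qinv g) (lam • Qinv (adjoint B t))
  simp only [map_neg, inner_neg_neg, map_smul, real_inner_smul_left, real_inner_smul_right,
    inner_inv_adjoint_map_inv_adjoint hinv, hinv g, ← mul_assoc, ← sq] at hprimal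
  have hdual := mul_le_mul_of_nonneg_left
    (((hQ.of_rightInverse hinv).conj_adjoint B).inner_sub_map_sub_le t e) (sq_nonneg lam)
  obtain ⟨hg, he⟩ := le_dissipation hQ hinv hlam hc.le hC g e t
  have hg' : ‖Qinv‖ * ‖g‖ ^ 2 ≤ ‖Qinv‖ / (2 * β - ‖Qinv‖) * dissipation B Qinv lam β g e t := by
    rw [div_mul_eq_mul_div, le_div_iff₀ (by linarith)]
    nlinarith [norm_nonneg Qinv]
  have hgg : 0 ≤ (2 * β - ‖Qinv‖) * ‖g‖ ^ 2 := mul_nonneg (by linarith) (sq_nonneg _)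
  have hQg : ⟪Qinv g, g⟫ ≤ ‖Qinv‖ * ‖g‖ ^ 2 := Qinv.real_inner_apply_self_le g
  have hD : dissipation B Qinv lam β g e t = (2 * β - ‖Qinv‖) * ‖g‖ ^ 2
      + lam ^ 2 * ⟪e, (B ∘L Qinv ∘L adjoint B) e⟫
      + (lam * ‖t - e‖ ^ 2 - lam ^ 2 * ⟪t - e, (B ∘L Qinv ∘L adjoint B) (t - e)⟫) := rfl
  have hK : (2 * ‖Qinv‖ / (2 * β - ‖Qinv‖) + 3) * dissipation B Qinv lam β g e t
      = 2 * (‖Qinv‖ / (2 * β - ‖Qinv‖) * dissipation B Qinv lam β g e t)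
        + 3 * dissipation B Qinv lam β g e t := by ring
  rw [hsplit, hK]
  linarith

end Splitting

section Iteration

variable {E F : Type*} [NormedAddCommGroup E] [InnerProductSpace ℝ E]
  [NormedAddCommGroup F] [InnerProductSpace ℝ F]
  {B : E →L[ℝ] F} {Badj : F →L[ℝ] E} {Q Qinv : E →L[ℝ] E} {lam : ℝ} {grad : E → E}
  {prox : F → F} {T1 : F → E → F} {T2 : F → E → E} {vs : F} {us : E}

theorem T2_sub_fixedPoint
    (hT2 : ∀ v u, T2 v u = u - Qinv (grad u) - lam • Qinv (Badj (T1 v u)))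
    (hvs : T1 vs us = vs) (hus : T2 vs us = us) (v : F) (u : E) :
    T2 v u - us = (u - us - Qinv (grad u - grad us)) - lam • Qinv (Badj (T1 v u - vs)) := by
  conv_lhs => rw [← hus, hT2, hT2, hvs]
  simp only [map_sub, smul_sub]
  abel

theorem norm_T1_sub_fixedPoint_sq_le
    (hT1 : ∀ v u, T1 v u = (B (u - Qinv (grad u)) + (v - lam • B (Qinv (Badj v))))
      - prox (B (u - Qinv (grad u)) + (v - lam • B (Qinv (Badj v)))))
    (hfirm : ∀ a b, ‖(a - prox a) - (b - prox b)‖ ^ 2 ≤ ⟪(a - prox a) - (b - prox b), a - b⟫)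
    (hvs : T1 vs us = vs) (v : F) (u : E) :
    ‖T1 v u - vs‖ ^ 2 ≤ ⟪T1 v u - vs,
      B (u - us - Qinv (grad u - grad us)) + (v - vs) - lam • (B ∘L Qinv ∘L Badj) (v - vs)⟫ := by
  have hdiff : B (u - us - Qinv (grad u - grad us)) + (v - vs) - lam • (B ∘L Qinv ∘L Badj) (v - vs)
      = (B (u - Qinv (grad u)) + (v - lam • B (Qinv (Badj v))))
        - (B (us - Qinv (grad us)) + (vs - lam • B (Qinv (Badj vs)))) := by
    simp only [comp_apply, map_sub, smul_sub]
    abel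
  have h := hfirm (B (u - Qinv (grad u)) + (v - lam • B (Qinv (Badj v))))
    (B (us - Qinv (grad us)) + (vs - lam • B (Qinv (Badj vs))))
  rwa [← hT1, ← hT1, hvs, ← hdiff] at h

end Iteration

theorem tendsto_inner_increment_add_norm_sq {E F : Type*} [NormedAddCommGroup E]
    [InnerProductSpace ℝ E] [CompleteSpace E] [NormedAddCommGroup F] [InnerProductSpace ℝ F]
    [CompleteSpace F] {B : E →L[ℝ] F} {Q Qinv : E →L[ℝ] E} {lam β : ℝ} {grad : E → E}
    {prox : F → F} {T1 : F → E → F} {T2 : F → E → E} {vs : F} {us : E}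
    (hQ : Q.IsPositive) (hinv : Function.RightInverse Qinv Q) (hlam : 0 < lam)
    (hC : ∀ y, lam * ⟪y, (B ∘L Qinv ∘L adjoint B) y⟫ ≤ ‖y‖ ^ 2)
    (hco : ∀ x y, β * ‖grad x - grad y‖ ^ 2 ≤ ⟪grad x - grad y, x - y⟫)
    (hβ : ‖Qinv‖ < 2 * β)
    (hfirm : ∀ a b, ‖(a - prox a) - (b - prox b)‖ ^ 2 ≤ ⟪(a - prox a) - (b - prox b), a - b⟫)
    (hT1 : ∀ v u, T1 v u = (B (u - Qinv (grad u)) + (v - lam • B (Qinv (adjoint B v))))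
      - prox (B (u - Qinv (grad u)) + (v - lam • B (Qinv (adjoint B v)))))
    (hT2 : ∀ v u, T2 v u = u - Qinv (grad u) - lam • Qinv (adjoint B (T1 v u)))
    (hvs : T1 vs us = vs) (hus : T2 vs us = us) {v : ℕ → F} {u : ℕ → E}
    (hrecv : ∀ k, v (k + 1) = T1 (v k) (u k)) (hrecu : ∀ k, u (k + 1) = T2 (v k) (u k)) :
    Tendsto (fun k => ⟪u (k + 1) - u k, Q (u (k + 1) - u k)⟫ + lam * ‖v (k + 1) - v k‖ ^ 2)
      atTop (𝓝 0) := by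
  have hu' (k : ℕ) : u (k + 1) - us = (u k - us - Qinv (grad (u k) - grad us))
      - lam • Qinv (adjoint B (v (k + 1) - vs)) := by
    rw [hrecu, hrecv, T2_sub_fixedPoint hT2 hvs hus]
  set d : ℕ → ℝ := fun k =>
    dissipation B Qinv lam β (grad (u k) - grad us) (v k - vs) (v (k + 1) - vs)
  have hd_nonneg (k : ℕ) : 0 ≤ d k :=
    (mul_nonneg (by linarith) (sq_nonneg _)).trans
      (le_dissipation hQ hinv hlam.le hβ.le hC _ _ _).1
  have hdesc (k : ℕ) : ⟪u (k + 1) - us, Q (u (k + 1) - us)⟫ + lam * ‖v (k + 1) - vs‖ ^ 2 + d k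
      ≤ ⟪u k - us, Q (u k - us)⟫ + lam * ‖v k - vs‖ ^ 2 := by
    have hfirm_k : ‖v (k + 1) - vs‖ ^ 2 ≤ ⟪v (k + 1) - vs,
        B (u k - us - Qinv (grad (u k) - grad us)) + (v k - vs)
          - lam • (B ∘L Qinv ∘L adjoint B) (v k - vs)⟫ := by
      rw [hrecv]; exact norm_T1_sub_fixedPoint_sq_le hT1 hfirm hvs _ _
    rw [hu']
    exact lyapunov_descent hQ.isSymmetric hinv hlam.le (hco (u k) us) hfirm_k
  have hd0 : Tendsto d atTop (𝓝 0) :=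
    tendsto_zero_of_succ_add_le (b := fun k => ⟪u k - us, Q (u k - us)⟫ + lam * ‖v k - vs‖ ^ 2)
      (fun k => add_nonneg (hQ.inner_nonneg_right _) (by positivity)) hd_nonneg hdesc
  have hW (k : ℕ) : ⟪u (k + 1) - u k, Q (u (k + 1) - u k)⟫ + lam * ‖v (k + 1) - v k‖ ^ 2
      ≤ (2 * ‖Qinv‖ / (2 * β - ‖Qinv‖) + 3) * d k + 4 * d (k + 1) := by
    have hinc := inner_increment_le hQ hinv hlam.le hβ hC (u k - us) (grad (u k) - grad us)
      (v k - vs) (v (k + 1) - vs)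
    rw [← hu', sub_sub_sub_cancel_right, sub_sub_sub_cancel_right] at hinc
    have hnext := (le_dissipation hQ hinv hlam.le hβ.le hC
      (grad (u (k + 1)) - grad us) (v (k + 1) - vs) (v (k + 2) - vs)).2
    linarith
  refine squeeze_zero (fun k => add_nonneg (hQ.inner_nonneg_right _) (by positivity)) hW ?_
  simpa using (hd0.const_mul _).add ((hd0.comp (tendsto_add_atTop_nat 1)).const_mul 4)

end FP2O

theorem fp2o_qn_asymptotic_regularity_general (N M : ℕ)
    (f₁ : EuclideanSpace ℝ (Fin M) → ℝ) (hf₁ : ConvexOn ℝ Set.univ f₁)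
    (gradf₂ : EuclideanSpace ℝ (Fin N) → EuclideanSpace ℝ (Fin N))
    (B : EuclideanSpace ℝ (Fin N) →L[ℝ] EuclideanSpace ℝ (Fin M))
    (Badj : EuclideanSpace ℝ (Fin M) →L[ℝ] EuclideanSpace ℝ (Fin N))
    (hadj : ∀ (x : EuclideanSpace ℝ (Fin N)) (y : EuclideanSpace ℝ (Fin M)),
      ⟪B x, y⟫ = ⟪x, Badj y⟫)
    (Q Qinv : EuclideanSpace ℝ (Fin N) →L[ℝ] EuclideanSpace ℝ (Fin N))
    (hQsymm : ∀ x y : EuclideanSpace ℝ (Fin N), ⟪Q x, y⟫ = ⟪x, Q y⟫)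
    (hQpos : ∀ x : EuclideanSpace ℝ (Fin N), x ≠ 0 → 0 < ⟪x, Q x⟫)
    (hQinv₂ : ∀ x, Q (Qinv x) = x)
    (lam : ℝ) (hlam : 0 < lam)
    (β : ℝ)
    (hcoco : ∀ v w : EuclideanSpace ℝ (Fin N),
      β * ‖gradf₂ v - gradf₂ w‖ ^ 2 ≤ ⟪gradf₂ v - gradf₂ w, v - w⟫)
    (lmax : ℝ)
    (hlmax : IsGreatest
      {μ : ℝ | Module.End.HasEigenvalue ((B.comp (Qinv.comp Badj)).toLinearMap) μ} lmax)
    (hlam2 : lam ≤ 1 / lmax)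
    (prox : EuclideanSpace ℝ (Fin M) → EuclideanSpace ℝ (Fin M))
    (hprox : ∀ w p, prox w = p ↔
      ∀ z : EuclideanSpace ℝ (Fin M),
        (1 / lam) * f₁ p + (1 / 2) * ‖p - w‖ ^ 2 ≤ (1 / lam) * f₁ z + (1 / 2) * ‖z - w‖ ^ 2)
    (T1 : EuclideanSpace ℝ (Fin M) → EuclideanSpace ℝ (Fin N) → EuclideanSpace ℝ (Fin M))
    (hT1 : ∀ v u, T1 v u =
      (B (u - Qinv (gradf₂ u)) + (v - lam • B (Qinv (Badj v))))
        - prox (B (u - Qinv (gradf₂ u)) + (v - lam • B (Qinv (Badj v)))))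
    (T2 : EuclideanSpace ℝ (Fin M) → EuclideanSpace ℝ (Fin N) → EuclideanSpace ℝ (Fin N))
    (hT2 : ∀ v u, T2 v u = u - Qinv (gradf₂ u) - lam • Qinv (Badj (T1 v u)))
    (hQnorm : ‖Qinv‖ < 2 * β)
    (hfix : ∃ (vs : EuclideanSpace ℝ (Fin M)) (us : EuclideanSpace ℝ (Fin N)),
      T1 vs us = vs ∧ T2 vs us = us)
    (v : ℕ → EuclideanSpace ℝ (Fin M)) (u : ℕ → EuclideanSpace ℝ (Fin N))
    (hrecv : ∀ k, v (k + 1) = T1 (v k) (u k))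
    (hrecu : ∀ k, u (k + 1) = T2 (v k) (u k)) :
    Tendsto (fun k => Real.sqrt (⟪u (k + 1) - u k, Q (u (k + 1) - u k)⟫
        + lam * ‖v (k + 1) - v k‖ ^ 2)) atTop (𝓝 0) ∧
    Tendsto (fun k => ‖v (k + 1) - v k‖) atTop (𝓝 0) ∧
    Tendsto (fun k => Real.sqrt ⟪u (k + 1) - u k, Q (u (k + 1) - u k)⟫) atTop (𝓝 0) := by
  obtain ⟨vs, us, hvs, hus⟩ := hfix
  obtain rfl : Badj = adjoint B := (eq_adjoint_iff _ _).2 fun y x => by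
    rw [real_inner_comm, ← hadj, real_inner_comm]
  have hQ : Q.IsPositive := (isPositive_iff Q).2 ⟨hQsymm, fun x => by
    rcases eq_or_ne x 0 with rfl | hx
    · simp
    · exact real_inner_comm x (Q x) ▸ (hQpos x hx).le⟩
  have hC := mul_inner_map_self_le_norm_sq
    ((hQ.of_rightInverse hQinv₂).conj_adjoint B).isSymmetric hlmax.2 hlam hlam2
  have hfirm (a b : EuclideanSpace ℝ (Fin M)) :=
    (hf₁.smul (one_div_pos.2 hlam).le).norm_sub_sub_sq_le_inner_of_isMinOn
      (isMinOn_univ_iff.2 ((hprox a _).1 rfl)) (isMinOn_univ_iff.2 ((hprox b _).1 rfl))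
  have hW := FP2O.tendsto_inner_increment_add_norm_sq hQ hQinv₂ hlam hC hcoco hQnorm hfirm
    hT1 hT2 hvs hus hrecv hrecu
  have hsqrt : Tendsto (fun k => Real.sqrt (⟪u (k + 1) - u k, Q (u (k + 1) - u k)⟫
      + lam * ‖v (k + 1) - v k‖ ^ 2)) atTop (𝓝 0) := by simpa only [Real.sqrt_zero] using hW.sqrt
  refine ⟨hsqrt, ?_, ?_⟩
  · refine squeeze_zero (fun k => norm_nonneg _) (fun k => ?_)
      (by simpa only [zero_div, Real.sqrt_zero] using (hW.div_const lam).sqrt)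
    refine Real.le_sqrt_of_sq_le ((le_div_iff₀ hlam).2 ?_)
    nlinarith [hQ.inner_nonneg_right (u (k + 1) - u k)]
  · refine squeeze_zero (fun k => Real.sqrt_nonneg _) (fun k => Real.sqrt_le_sqrt ?_) hsqrt
    exact le_add_of_nonneg_right (mul_nonneg hlam.le (sq_nonneg _))

/-- Under `‖Q⁻¹‖₂ < 2β` and `0 < λ ≤ 1/λ_max(BQ⁻¹Bᵀ)`, if `T` has a fixed point, the
FP²O_QN iteration `w^{k+1} = T(w^k)` is asymptotically regular:
`‖w^{k+1} − w^k‖_{λ,Q} → 0`; in particular `‖v^{k+1} − v^k‖ → 0` and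
`‖u^{k+1} − u^k‖_Q → 0`. -/
theorem fp2o_qn_asymptotic_regularity (N M : ℕ)
    (f₁ : EuclideanSpace ℝ (Fin M) → ℝ) (hf₁ : ConvexOn ℝ Set.univ f₁)
    (f₂ : EuclideanSpace ℝ (Fin N) → ℝ) (hf₂ : ConvexOn ℝ Set.univ f₂)
    (gradf₂ : EuclideanSpace ℝ (Fin N) → EuclideanSpace ℝ (Fin N))
    (hgrad : ∀ u, HasGradientAt f₂ (gradf₂ u) u)
    (B : EuclideanSpace ℝ (Fin N) →L[ℝ] EuclideanSpace ℝ (Fin M))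
    (Badj : EuclideanSpace ℝ (Fin M) →L[ℝ] EuclideanSpace ℝ (Fin N))
    (hadj : ∀ (x : EuclideanSpace ℝ (Fin N)) (y : EuclideanSpace ℝ (Fin M)),
      ⟪B x, y⟫ = ⟪x, Badj y⟫)
    (Q Qinv : EuclideanSpace ℝ (Fin N) →L[ℝ] EuclideanSpace ℝ (Fin N))
    (hQsymm : ∀ x y : EuclideanSpace ℝ (Fin N), ⟪Q x, y⟫ = ⟪x, Q y⟫)
    (hQpos : ∀ x : EuclideanSpace ℝ (Fin N), x ≠ 0 → 0 < ⟪x, Q x⟫)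
    (hQinv₁ : ∀ x, Qinv (Q x) = x) (hQinv₂ : ∀ x, Q (Qinv x) = x)
    (lam : ℝ) (hlam : 0 < lam)
    (β : ℝ) (hβ : 0 < β)
    (hcoco : ∀ v w : EuclideanSpace ℝ (Fin N),
      β * ‖gradf₂ v - gradf₂ w‖ ^ 2 ≤ ⟪gradf₂ v - gradf₂ w, v - w⟫)
    (lmax : ℝ)
    (hlmax : IsGreatest
      {μ : ℝ | Module.End.HasEigenvalue ((B.comp (Qinv.comp Badj)).toLinearMap) μ} lmax)
    (hlam2 : lam ≤ 1 / lmax)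
    (prox : EuclideanSpace ℝ (Fin M) → EuclideanSpace ℝ (Fin M))
    (hprox : ∀ w p, prox w = p ↔
      ∀ z : EuclideanSpace ℝ (Fin M),
        (1 / lam) * f₁ p + (1 / 2) * ‖p - w‖ ^ 2 ≤ (1 / lam) * f₁ z + (1 / 2) * ‖z - w‖ ^ 2)
    (T1 : EuclideanSpace ℝ (Fin M) → EuclideanSpace ℝ (Fin N) → EuclideanSpace ℝ (Fin M))
    (hT1 : ∀ v u, T1 v u =
      (B (u - Qinv (gradf₂ u)) + (v - lam • B (Qinv (Badj v))))
        - prox (B (u - Qinv (gradf₂ u)) + (v - lam • B (Qinv (Badj v)))))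
    (T2 : EuclideanSpace ℝ (Fin M) → EuclideanSpace ℝ (Fin N) → EuclideanSpace ℝ (Fin N))
    (hT2 : ∀ v u, T2 v u = u - Qinv (gradf₂ u) - lam • Qinv (Badj (T1 v u)))
    (hQnorm : ‖Qinv‖ < 2 * β)
    (hfix : ∃ (vs : EuclideanSpace ℝ (Fin M)) (us : EuclideanSpace ℝ (Fin N)),
      T1 vs us = vs ∧ T2 vs us = us)
    (v : ℕ → EuclideanSpace ℝ (Fin M)) (u : ℕ → EuclideanSpace ℝ (Fin N))
    (hrecv : ∀ k, v (k + 1) = T1 (v k) (u k))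
    (hrecu : ∀ k, u (k + 1) = T2 (v k) (u k)) :
    Tendsto (fun k => Real.sqrt (⟪u (k + 1) - u k, Q (u (k + 1) - u k)⟫
        + lam * ‖v (k + 1) - v k‖ ^ 2)) atTop (𝓝 0) ∧
    Tendsto (fun k => ‖v (k + 1) - v k‖) atTop (𝓝 0) ∧
    Tendsto (fun k => Real.sqrt ⟪u (k + 1) - u k, Q (u (k + 1) - u k)⟫) atTop (𝓝 0) :=
  fp2o_qn_asymptotic_regularity_general N M f₁ hf₁ gradf₂ B Badj hadj Q Qinv hQsymm hQpos hQinv₂ lam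
    hlam β hcoco lmax hlmax hlam2 prox hprox T1 hT1 T2 hT2 hQnorm hfix v u hrecv hrecu
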